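/- Let n ≥ 2, p_c = 2(n+1)/(n-1), and λ ≥ 1, ε ∈ (0, λ/2). Then ∫₀^∞ r^{2/p_c} / |r² - (λ + iε)²|² dr ≤ C λ^{-2 + 2/p_c} ε^{-1} for a constant C depending only on n. -/

import Mathlib

/-!
Write `a = 2 / p_c ∈ [0, 1]` and `D(r) = (r² - λ² + ε²)² + 4λ²ε²`. For `r ≥ 0` we have
`D(r) ≥ λ² ((r - λ)² + ε²)` because `(r² - λ²)² ≥ λ² (r - λ)²`, and for `r ≥ 2λ` also
`D(r) ≥ r⁴ / 2`. So `r^a / D(r)` is dominated by `2 λ^(a-2)` times a Cauchy profile of width `ε`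
centred at `λ`, whose integral is `π / ε`, plus the tail `2 max(r, 2λ)^(a-4)`, whose integral is
`O(λ^(a-3)) ≤ O(λ^(a-2) / ε)`.
-/

open Real MeasureTheory Set

/-- The critical exponent `p_c = 2(n+1)/(n-1)`. -/
noncomputable def pc (n : ℕ) : ℝ := 2 * ((n : ℝ) + 1) / ((n : ℝ) - 1)

open scoped NNReal
open ProbabilityTheory

lemma inv_sq_sub_add_sq_eq_cauchyPDFReal (c : ℝ) {γ : ℝ≥0} (hγ : γ ≠ 0) (x : ℝ) :
    ((x - c) ^ 2 + (γ : ℝ) ^ 2)⁻¹ = π / γ * cauchyPDFReal c γ x := by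
  have : (γ : ℝ) ≠ 0 := by exact_mod_cast hγ
  rw [cauchyPDFReal_def]
  field_simp

lemma integrable_inv_sq_sub_add_sq (c : ℝ) {γ : ℝ} (hγ : 0 < γ) :
    Integrable fun x : ℝ ↦ ((x - c) ^ 2 + γ ^ 2)⁻¹ := by
  lift γ to ℝ≥0 using hγ.le
  simp_rw [inv_sq_sub_add_sq_eq_cauchyPDFReal c (ne_of_gt (by exact_mod_cast hγ))]
  exact (integrable_cauchyPDFReal c).const_mul _

lemma integral_inv_sq_sub_add_sq (c : ℝ) {γ : ℝ} (hγ : 0 < γ) :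
    ∫ x : ℝ, ((x - c) ^ 2 + γ ^ 2)⁻¹ = π / γ := by
  lift γ to ℝ≥0 using hγ.le
  have hγ0 : γ ≠ 0 := ne_of_gt (by exact_mod_cast hγ)
  simp_rw [inv_sq_sub_add_sq_eq_cauchyPDFReal c hγ0, integral_const_mul,
    integral_cauchyPDFReal_eq_one c hγ0, mul_one]

lemma integrableOn_max_rpow {b c : ℝ} (hb : b < -1) (hc : 0 < c) :
    IntegrableOn (fun r : ℝ ↦ max r c ^ b) (Ioi 0) := by
  rw [← Ioc_union_Ioi_eq_Ioi hc.le]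
  refine IntegrableOn.union ?_ ?_
  · exact (integrableOn_const (C := c ^ b) measure_Ioc_lt_top.ne).congr_fun
      (fun r hr ↦ by rw [max_eq_right hr.2]) measurableSet_Ioc
  · exact (integrableOn_Ioi_rpow_of_lt hb hc).congr_fun
      (fun r hr ↦ by rw [max_eq_left (le_of_lt hr)]) measurableSet_Ioi

lemma integral_max_rpow {b c : ℝ} (hb : b < -1) (hc : 0 < c) :
    ∫ r in Ioi 0, max r c ^ b = c ^ (b + 1) * (b / (b + 1)) := by
  have hint := integrableOn_max_rpow hb hc
  rw [← Ioc_union_Ioi_eq_Ioi hc.le] at hint ⊢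
  rw [setIntegral_union (Ioc_disjoint_Ioi le_rfl) measurableSet_Ioi
    (hint.mono_set subset_union_left) (hint.mono_set subset_union_right),
    setIntegral_congr_fun measurableSet_Ioc (g := fun _ ↦ c ^ b)
      (fun r hr ↦ by rw [max_eq_right hr.2]),
    setIntegral_congr_fun measurableSet_Ioi (g := fun r ↦ r ^ b)
      (fun r hr ↦ by rw [max_eq_left (le_of_lt hr)]),
    setIntegral_const, Real.volume_real_Ioc_of_le hc.le, integral_Ioi_rpow_of_lt hb hc,
    rpow_add_one hc.ne', smul_eq_mul]
  have : b + 1 ≠ 0 := by linarith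
  field_simp
  ring

section Majorant

variable {a lam ε r : ℝ}

lemma sq_mul_sq_sub_add_sq_le (hr : 0 ≤ r) (hlam : 0 ≤ lam) :
    lam ^ 2 * ((r - lam) ^ 2 + ε ^ 2) ≤ (r ^ 2 - lam ^ 2 + ε ^ 2) ^ 2 + 4 * lam ^ 2 * ε ^ 2 := by
  nlinarith [mul_nonneg (mul_nonneg (sq_nonneg (r - lam)) hr) (by positivity : 0 ≤ r + 2 * lam),
    sq_nonneg (r * ε), sq_nonneg (lam * ε), sq_nonneg (ε ^ 2)]

lemma pow_four_div_two_le (hlam : 0 ≤ lam) (hr : 2 * lam ≤ r) :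
    r ^ 4 / 2 ≤ (r ^ 2 - lam ^ 2 + ε ^ 2) ^ 2 + 4 * lam ^ 2 * ε ^ 2 := by
  have h : 3 / 4 * r ^ 2 ≤ r ^ 2 - lam ^ 2 + ε ^ 2 := by nlinarith
  nlinarith [pow_le_pow_left₀ (by positivity) h 2, sq_nonneg (lam * ε)]

lemma rpow_div_le_of_le_two_mul (ha0 : 0 ≤ a) (ha1 : a ≤ 1) (hε : 0 < ε) (hr : 0 < r)
    (hrlam : r ≤ 2 * lam) :
    r ^ a / ((r ^ 2 - lam ^ 2 + ε ^ 2) ^ 2 + 4 * lam ^ 2 * ε ^ 2) ≤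
      2 * lam ^ (a - 2) * ((r - lam) ^ 2 + ε ^ 2)⁻¹ := by
  have hlam : 0 < lam := by linarith
  have hnum : r ^ a ≤ 2 * lam ^ a :=
    calc r ^ a ≤ (2 * lam) ^ a := rpow_le_rpow hr.le hrlam ha0
      _ = 2 ^ a * lam ^ a := mul_rpow zero_le_two hlam.le
      _ ≤ 2 * lam ^ a := by
        gcongr
        simpa using rpow_le_rpow_of_exponent_le one_le_two ha1
  calc r ^ a / ((r ^ 2 - lam ^ 2 + ε ^ 2) ^ 2 + 4 * lam ^ 2 * ε ^ 2)
      ≤ 2 * lam ^ a / (lam ^ 2 * ((r - lam) ^ 2 + ε ^ 2)) :=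
        div_le_div₀ (by positivity) hnum (by positivity) (sq_mul_sq_sub_add_sq_le hr.le hlam.le)
    _ = 2 * lam ^ (a - 2) * ((r - lam) ^ 2 + ε ^ 2)⁻¹ := by
        rw [rpow_sub hlam, rpow_two]
        field_simp

lemma rpow_div_le_of_two_mul_le (hlam : 0 ≤ lam) (hrlam : 2 * lam ≤ r) (hr : 0 < r) :
    r ^ a / ((r ^ 2 - lam ^ 2 + ε ^ 2) ^ 2 + 4 * lam ^ 2 * ε ^ 2) ≤ 2 * r ^ (a - 4) :=
  calc r ^ a / ((r ^ 2 - lam ^ 2 + ε ^ 2) ^ 2 + 4 * lam ^ 2 * ε ^ 2)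
      ≤ r ^ a / (r ^ 4 / 2) :=
        div_le_div_of_nonneg_left (by positivity) (by positivity) (pow_four_div_two_le hlam hrlam)
    _ = 2 * r ^ (a - 4) := by
        rw [rpow_sub hr, rpow_ofNat]
        field_simp

lemma rpow_div_le_majorant (ha0 : 0 ≤ a) (ha1 : a ≤ 1) (hε : 0 < ε) (hlam : 0 ≤ lam)
    (hr : 0 < r) :
    r ^ a / ((r ^ 2 - lam ^ 2 + ε ^ 2) ^ 2 + 4 * lam ^ 2 * ε ^ 2) ≤
      2 * lam ^ (a - 2) * ((r - lam) ^ 2 + ε ^ 2)⁻¹ + 2 * max r (2 * lam) ^ (a - 4) := by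
  rcases le_total r (2 * lam) with hrlam | hrlam
  · have : 0 ≤ 2 * max r (2 * lam) ^ (a - 4) := by positivity
    linarith [rpow_div_le_of_le_two_mul ha0 ha1 hε hr hrlam]
  · have : 0 ≤ 2 * lam ^ (a - 2) * ((r - lam) ^ 2 + ε ^ 2)⁻¹ := by positivity
    rw [max_eq_left hrlam]
    linarith [rpow_div_le_of_two_mul_le (a := a) (ε := ε) hlam hrlam hr]

end Majorant

theorem integral_rpow_div_le {a lam ε : ℝ} (ha0 : 0 ≤ a) (ha1 : a ≤ 1) (hε : 0 < ε)
    (hεlam : ε ≤ lam) :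
    ∫ r in Ioi 0, r ^ a / ((r ^ 2 - lam ^ 2 + ε ^ 2) ^ 2 + 4 * lam ^ 2 * ε ^ 2) ≤
      (2 * π + 4) * lam ^ (a - 2) * ε⁻¹ := by
  have hlam : 0 < lam := hε.trans_le hεlam
  have hb : a - 4 < -1 := by linarith
  have hlorentz := integrable_inv_sq_sub_add_sq lam hε
  have htail := integrableOn_max_rpow hb (by positivity : 0 < 2 * lam)
  have hcorner : (2 * lam) ^ (a - 3) ≤ lam ^ (a - 2) * ε⁻¹ :=
    calc (2 * lam) ^ (a - 3) ≤ lam ^ (a - 3) :=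
          rpow_le_rpow_of_nonpos hlam (by linarith) (by linarith)
      _ = lam ^ (a - 2) * lam⁻¹ := by rw [← rpow_neg_one, ← rpow_add hlam]; ring_nf
      _ ≤ lam ^ (a - 2) * ε⁻¹ := by gcongr
  have hratio : (a - 4) / (a - 3) ≤ 2 := by
    rw [div_le_iff_of_neg (by linarith)]; linarith
  calc ∫ r in Ioi 0, r ^ a / ((r ^ 2 - lam ^ 2 + ε ^ 2) ^ 2 + 4 * lam ^ 2 * ε ^ 2)
      ≤ ∫ r in Ioi 0,
          (2 * lam ^ (a - 2) * ((r - lam) ^ 2 + ε ^ 2)⁻¹ + 2 * max r (2 * lam) ^ (a - 4)) := by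
        refine integral_mono_of_nonneg ?_
          ((hlorentz.integrableOn.const_mul _).add (htail.const_mul _)) ?_
        · filter_upwards [ae_restrict_mem measurableSet_Ioi] with r hr
          have : 0 < r := hr
          positivity
        · filter_upwards [ae_restrict_mem measurableSet_Ioi] with r hr
          exact rpow_div_le_majorant ha0 ha1 hε hlam.le hr
    _ = 2 * lam ^ (a - 2) * (∫ r in Ioi 0, ((r - lam) ^ 2 + ε ^ 2)⁻¹)
          + 2 * ((2 * lam) ^ (a - 4 + 1) * ((a - 4) / (a - 4 + 1))) := by
        rw [integral_add (hlorentz.integrableOn.const_mul _) (htail.const_mul _),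
          integral_const_mul, integral_const_mul, integral_max_rpow hb (by positivity)]
    _ ≤ 2 * lam ^ (a - 2) * (π / ε) + 2 * ((lam ^ (a - 2) * ε⁻¹) * 2) := by
        rw [← integral_inv_sq_sub_add_sq lam hε, show a - 4 + 1 = a - 3 by ring]
        gcongr 2 * lam ^ (a - 2) * ?_ + 2 * ?_
        · exact setIntegral_le_integral hlorentz (Filter.Eventually.of_forall fun r ↦ by positivity)
        · exact mul_le_mul hcorner hratio (div_nonneg_of_nonpos (by linarith) (by linarith))
            (by positivity)
    _ = (2 * π + 4) * lam ^ (a - 2) * ε⁻¹ := by ring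

lemma two_div_pc_mem_Icc {n : ℕ} (hn : 2 ≤ n) : 2 / pc n ∈ Icc 0 1 := by
  have hn' : (2 : ℝ) ≤ n := by exact_mod_cast hn
  have h : 2 / pc n = ((n : ℝ) - 1) / (n + 1) := by
    rw [pc]
    field_simp [show (n : ℝ) - 1 ≠ 0 by linarith]
  rw [h]
  exact ⟨div_nonneg (by linarith) (by positivity), (div_le_one (by positivity)).2 (by linarith)⟩

/-- for `n ≥ 2`, `p_c = 2(n+1)/(n-1)`, there is a constant `C` depending only on
`n` such that for all `λ ≥ 1` and `ε ∈ (0, λ/2)`,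
`∫₀^∞ r^{2/p_c} / |r² - (λ+iε)²|² dr ≤ C λ^{-2+2/p_c} ε^{-1}`, where
`|r² - (λ+iε)²|² = (r² - λ² + ε²)² + 4λ²ε²`. -/
theorem stmt_3 (n : ℕ) (hn : 2 ≤ n) :
    ∃ C : ℝ, 0 < C ∧ ∀ lam ε : ℝ, 1 ≤ lam → ε ∈ Set.Ioo 0 (lam / 2) →
      (∫ r in Set.Ioi (0 : ℝ),
          r ^ (2 / pc n) / ((r ^ 2 - lam ^ 2 + ε ^ 2) ^ 2 + 4 * lam ^ 2 * ε ^ 2)) ≤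
        C * lam ^ (-2 + 2 / pc n) * ε⁻¹ := by
  obtain ⟨ha0, ha1⟩ := two_div_pc_mem_Icc hn
  refine ⟨2 * π + 4, by positivity, fun lam ε _ ⟨hε, hεlam⟩ ↦ ?_⟩
  rw [neg_add_eq_sub]
  exact integral_rpow_div_le ha0 ha1 hε (by linarith)
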